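/- arXiv:1709.09743 — 8 statements merged into one kernel-verified Lean document; each statement's English description precedes it below -/
import Mathlib

section
/- For un-normalized distributions p, q ∈ (0,∞)^V both evolving under the same master equation dp/dt = Hp, dq/dt = Hq with H infinitesimal stochastic, the generalized relative entropy I(p,q) = ∑_i [p_i ln(p_i/q_i) − (p_i − q_i)] is non-increasing in time: d/dt I(p(t),q(t)) ≤ 0. -/
open Finset

lemma stmt_2_key (a b c e : ℝ) (ha : 0 < a) (hb : 0 < b) (hc : 0 < c) (he : 0 < e) :
    c * ((Real.log a - Real.log b) - (Real.log c - Real.log e)) ≤ e * a / b - c := by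
  have hz : 0 < a * e / (b * c) := by positivity
  have h1 : Real.log (a * e / (b * c)) ≤ a * e / (b * c) - 1 :=
    Real.log_le_sub_one_of_pos hz
  have h2 : (Real.log a - Real.log b) - (Real.log c - Real.log e)
      = Real.log (a * e / (b * c)) := by
    rw [Real.log_div (by positivity) (by positivity),
      Real.log_mul ha.ne' he.ne', Real.log_mul hb.ne' hc.ne']
    ring
  rw [h2]
  have h3 : c * Real.log (a * e / (b * c)) ≤ c * (a * e / (b * c) - 1) :=
    mul_le_mul_of_nonneg_left h1 hc.le
  have h4 : c * (a * e / (b * c) - 1) = e * a / b - c := by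
    field_simp
  linarith

/-- The generalized relative entropy is non-increasing along the master equation. -/
theorem stmt_2 {V : Type*} [Fintype V] (H : V → V → ℝ)
    (hoff : ∀ i j, i ≠ j → 0 ≤ H i j)
    (hcol : ∀ j, ∑ i, H i j = 0)
    (p q : ℝ → V → ℝ)
    (hp0 : ∀ t i, 0 < p t i) (hq0 : ∀ t i, 0 < q t i)
    (hp : ∀ i t, HasDerivAt (fun s => p s i) (∑ j, H i j * p t j) t)
    (hq : ∀ i t, HasDerivAt (fun s => q s i) (∑ j, H i j * q t j) t)
    (t d : ℝ)
    (hd : HasDerivAt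
      (fun s => ∑ i, (p s i * Real.log (p s i / q s i) - (p s i - q s i))) d t) :
    d ≤ 0 := by
  classical
  set P : V → ℝ := fun i => ∑ j, H i j * p t j with hP
  set Q : V → ℝ := fun i => ∑ j, H i j * q t j with hQ
  set L : V → ℝ := fun i => Real.log (p t i) - Real.log (q t i) with hL
  -- derivative of each term of the sum
  have hderiv : ∀ i : V, HasDerivAt
      (fun s => p s i * Real.log (p s i / q s i) - (p s i - q s i))
      (P i * L i - p t i * Q i / q t i + Q i) t := by
    intro i
    have h1 := hp i t
    have h2 := hq i t
    have hlog1 : HasDerivAt (fun s => Real.log (p s i)) (P i / p t i) t := by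
      simpa using h1.log (hp0 t i).ne'
    have hlog2 : HasDerivAt (fun s => Real.log (q s i)) (Q i / q t i) t := by
      simpa using h2.log (hq0 t i).ne'
    have hmain : HasDerivAt
        (fun s => p s i * (Real.log (p s i) - Real.log (q s i)) - (p s i - q s i))
        (P i * (Real.log (p t i) - Real.log (q t i))
          + p t i * (P i / p t i - Q i / q t i) - (P i - Q i)) t :=
      (h1.mul (hlog1.sub hlog2)).sub (h1.sub h2)
    have heq : (fun s => p s i * (Real.log (p s i) - Real.log (q s i)) - (p s i - q s i))
        = (fun s => p s i * Real.log (p s i / q s i) - (p s i - q s i)) := by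
      funext s
      rw [Real.log_div (hp0 s i).ne' (hq0 s i).ne']
    rw [heq] at hmain
    convert hmain using 1
    have hpne : p t i ≠ 0 := (hp0 t i).ne'
    have hqne : q t i ≠ 0 := (hq0 t i).ne'
    field_simp
    ring
  have hsum : HasDerivAt
      (fun s => ∑ i, (p s i * Real.log (p s i / q s i) - (p s i - q s i)))
      (∑ i, (P i * L i - p t i * Q i / q t i + Q i)) t :=
    HasDerivAt.fun_sum (fun i _ => hderiv i)
  have hdval : d = ∑ i, (P i * L i - p t i * Q i / q t i + Q i) := hd.unique hsum
  -- the last sum vanishes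
  have hQ0 : ∑ i, Q i = 0 := by
    rw [hQ, Finset.sum_comm]
    refine Finset.sum_eq_zero fun j _ => ?_
    rw [← Finset.sum_mul, hcol j, zero_mul]
  have expand : ∀ i, P i * L i - p t i * Q i / q t i
      = ∑ j, H i j * (p t j * L i - q t j * (p t i / q t i)) := by
    intro i
    have h2 : p t i * Q i / q t i = Q i * (p t i / q t i) := by ring
    rw [h2]
    simp only [hP, hQ]
    rw [Finset.sum_mul, Finset.sum_mul, ← Finset.sum_sub_distrib]
    exact Finset.sum_congr rfl fun j _ => by ring
  have hdval2 : d = ∑ j, ∑ i, H i j * (p t j * L i - q t j * (p t i / q t i)) := by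
    rw [hdval, Finset.sum_add_distrib, hQ0, add_zero,
      show (∑ i, (P i * L i - p t i * Q i / q t i))
          = ∑ i, ∑ j, H i j * (p t j * L i - q t j * (p t i / q t i))
        from Finset.sum_congr rfl fun i _ => expand i,
      Finset.sum_comm]
  rw [hdval2]
  refine Finset.sum_nonpos fun j _ => ?_
  -- split off the diagonal term
  have hsplit : ∑ i, H i j * (p t j * L i - q t j * (p t i / q t i))
      = ∑ i ∈ Finset.univ.erase j, H i j *
          ((p t j * L i - q t j * (p t i / q t i))
            - (p t j * L j - q t j * (p t j / q t j))) := by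
    have hHjj : H j j = -∑ i ∈ Finset.univ.erase j, H i j := by
      have := hcol j
      rw [← Finset.add_sum_erase _ _ (Finset.mem_univ j)] at this
      linarith
    rw [← Finset.add_sum_erase _ (fun i => H i j * (p t j * L i - q t j * (p t i / q t i)))
      (Finset.mem_univ j), hHjj, neg_mul, Finset.sum_mul]
    rw [neg_add_eq_sub, ← Finset.sum_sub_distrib]
    refine Finset.sum_congr rfl fun i _ => ?_
    ring
  rw [hsplit]
  refine Finset.sum_nonpos fun i hi => ?_
  have hij : i ≠ j := (Finset.mem_erase.mp hi).1
  have hH : 0 ≤ H i j := hoff i j hij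
  have hterm : (p t j * L i - q t j * (p t i / q t i))
      - (p t j * L j - q t j * (p t j / q t j)) ≤ 0 := by
    have hk := stmt_2_key (p t i) (q t i) (p t j) (q t j)
      (hp0 t i) (hq0 t i) (hp0 t j) (hq0 t j)
    have hq' : q t j * (p t j / q t j) = p t j := by
      field_simp [(hq0 t j).ne']
    have : p t j * (L i - L j) ≤ q t j * p t i / q t i - p t j := hk
    rw [hq']
    have h5 : q t j * (p t i / q t i) = q t j * p t i / q t i := by ring
    rw [h5]
    nlinarith [this]
  exact mul_nonpos_of_nonneg_of_nonpos hH hterm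
end

section
/- For any convex function f : [0,∞) → ℝ, the f-divergence I_f(p,q) = ∑_i q_i f(p_i/q_i) is non-increasing along solutions of the master equation: if p, q ∈ (0,∞)^V both satisfy dp/dt = Hp and dq/dt = Hq with H infinitesimal stochastic, then d/dt I_f(p(t),q(t)) ≤ 0. -/
lemma tangent_le {f : ℝ → ℝ} {f' a b : ℝ} (hconv : ConvexOn ℝ (Set.Ici (0:ℝ)) f)
    (hfa : HasDerivAt f f' a) (ha : 0 < a) (hb : 0 < b) :
    f a + f' * (b - a) ≤ f b := by
  rcases lt_trichotomy a b with h | h | h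
  · have := hconv.le_slope_of_hasDerivAt ha.le hb.le h hfa
    rw [slope_def_field] at this
    have h' : 0 < b - a := by linarith
    rw [le_div_iff₀ h'] at this
    linarith
  · simp [h]
  · have := hconv.slope_le_of_hasDerivAt hb.le ha.le h hfa
    rw [slope_def_field] at this
    have h' : 0 < a - b := by linarith
    rw [div_le_iff₀ h'] at this
    nlinarith

/-- Any f-divergence with `f` convex is non-increasing along the master equation. -/
theorem stmt_4 {V : Type*} [Fintype V] (H : V → V → ℝ)
    (hoff : ∀ i j, i ≠ j → 0 ≤ H i j)
    (hcol : ∀ j, ∑ i, H i j = 0)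
    (f f' : ℝ → ℝ)
    (hconv : ConvexOn ℝ (Set.Ici (0:ℝ)) f)
    (hf' : ∀ x, HasDerivAt f (f' x) x)
    (p q : ℝ → V → ℝ)
    (hp0 : ∀ t i, 0 < p t i) (hq0 : ∀ t i, 0 < q t i)
    (hp : ∀ i t, HasDerivAt (fun s => p s i) (∑ j, H i j * p t j) t)
    (hq : ∀ i t, HasDerivAt (fun s => q s i) (∑ j, H i j * q t j) t)
    (t d : ℝ)
    (hd : HasDerivAt (fun s => ∑ i, q s i * f (p s i / q s i)) d t) :
    d ≤ 0 := by
  set x : V → ℝ := fun i => p t i / q t i with hx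
  have hqne : ∀ i, q t i ≠ 0 := fun i => (hq0 t i).ne'
  -- the computed derivative
  have hderiv : HasDerivAt (fun s => ∑ i, q s i * f (p s i / q s i))
      (∑ i, ((∑ j, H i j * q t j) * f (x i) +
        q t i * (f' (x i) *
          (((∑ j, H i j * p t j) * q t i - p t i * (∑ j, H i j * q t j)) / (q t i)^2)))) t := by
    apply HasDerivAt.fun_sum
    intro i _
    exact (hq i t).mul (((hf' (x i)).comp t ((hp i t).div (hq i t) (hqne i))))
  have hdval := hd.unique hderiv
  rw [hdval]
  -- rewrite each term as a double sum
  have key : ∀ i, ((∑ j, H i j * q t j) * f (x i) +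
        q t i * (f' (x i) *
          (((∑ j, H i j * p t j) * q t i - p t i * (∑ j, H i j * q t j)) / (q t i)^2)))
      = ∑ j, H i j * q t j * (f (x i) + f' (x i) * (x j - x i)) := by
    intro i
    have : ∑ j, H i j * q t j * (f (x i) + f' (x i) * (x j - x i))
        = ∑ j, (H i j * q t j * f (x i)
            + f' (x i) * (H i j * p t j) - f' (x i) * x i * (H i j * q t j)) := by
      apply Finset.sum_congr rfl
      intro j _
      have hxj : q t j * x j = p t j := by
        simp only [hx]
        rw [← mul_div_assoc]
        exact mul_div_cancel_left₀ _ (hqne j)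
      linear_combination (H i j * f' (x i)) * hxj
    rw [this]
    simp only [Finset.sum_add_distrib, Finset.sum_sub_distrib, ← Finset.mul_sum,
      ← Finset.sum_mul]
    simp only [hx]
    field_simp [hqne i]
    ring
  simp only [key]
  -- bound the double sum
  have bound : ∑ i, ∑ j, H i j * q t j * (f (x i) + f' (x i) * (x j - x i))
      ≤ ∑ i, ∑ j, H i j * q t j * f (x j) := by
    apply Finset.sum_le_sum; intro i _
    apply Finset.sum_le_sum; intro j _
    rcases eq_or_ne i j with rfl | hij
    · simp
    · have htan := tangent_le hconv (hf' (x i)) (div_pos (hp0 t i) (hq0 t i))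
        (div_pos (hp0 t j) (hq0 t j))
      exact mul_le_mul_of_nonneg_left htan
        (mul_nonneg (hoff i j hij) (hq0 t j).le)
  refine bound.trans ?_
  rw [Finset.sum_comm]
  have : ∀ j, ∑ i, H i j * q t j * f (x j) = (∑ i, H i j) * (q t j * f (x j)) := by
    intro j; rw [Finset.sum_mul]; apply Finset.sum_congr rfl; intros; ring
  simp only [this, hcol, zero_mul, Finset.sum_const_zero, le_refl]
end

section
/- For a differentiable convex function f, the key inequality underlying monotonicity of the f-divergence holds: f(y) − f(x) − f'(y)(y − x) ≤ 0 for all x, y in the domain; consequently ∑_{i,j} H_{ij} q_j [f(p_i/q_i) − f(p_j/q_j) + f'(p_i/q_i)(p_j/q_j − p_i/q_i)] ≤ 0 whenever H is infinitesimal stochastic and q_j > 0. -/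
/-- Convexity inequality `f(y) − f(x) − f'(y)(y−x) ≤ 0` and the resulting
non-positivity of the internal term in the f-divergence rate. -/
theorem stmt_5 {V : Type*} [Fintype V]
    (f f' : ℝ → ℝ)
    (hconv : ConvexOn ℝ (Set.Ici (0:ℝ)) f)
    (hf' : ∀ x, HasDerivAt f (f' x) x)
    (H : V → V → ℝ)
    (hoff : ∀ i j, i ≠ j → 0 ≤ H i j)
    (hcol : ∀ j, ∑ i, H i j = 0)
    (p q : V → ℝ) (hp : ∀ i, 0 < p i) (hq : ∀ i, 0 < q i) :
    (∀ x y : ℝ, 0 ≤ x → 0 ≤ y → f y - f x - f' y * (y - x) ≤ 0) ∧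
    ∑ i, ∑ j, H i j * q j *
      (f (p i / q i) - f (p j / q j) + f' (p i / q i) * (p j / q j - p i / q i)) ≤ 0 := by
  have key : ∀ x y : ℝ, 0 ≤ x → 0 ≤ y → f y - f x - f' y * (y - x) ≤ 0 := by
    intro x y hx hy
    rcases lt_trichotomy x y with h | h | h
    · have := hconv.slope_le_of_hasDerivAt hx hy h (hf' y)
      rw [slope_def_field, div_le_iff₀ (by linarith)] at this
      linarith
    · simp [h]
    · have := hconv.le_slope_of_hasDerivAt hy hx h (hf' y)
      rw [slope_def_field, le_div_iff₀ (by linarith)] at this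
      nlinarith
  refine ⟨key, ?_⟩
  refine Finset.sum_nonpos fun i _ => Finset.sum_nonpos fun j _ => ?_
  rcases eq_or_ne i j with rfl | hij
  · simp
  · have h1 : f (p i / q i) - f (p j / q j) + f' (p i / q i) * (p j / q j - p i / q i) ≤ 0 := by
      have := key (p j / q j) (p i / q i)
        (div_nonneg (hp j).le (hq j).le) (div_nonneg (hp i).le (hq i).le)
      linarith
    exact mul_nonpos_of_nonneg_of_nonpos (mul_nonneg (hoff i j hij) (hq j).le) h1
end

section
/- The entropy production rate of the three-state cyclic process in its steady state p* = (α²+2αβ, 2α²+αβ, 3α²) equals α²(α − β) ln(α/β), which is strictly positive when α ≠ β and zero when α = β. -/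
/-- Entropy production rate of the three-state cyclic process in its steady state
equals `α²(α−β)ln(α/β)`, positive iff `α ≠ β`. -/
theorem stmt_12 (α β : ℝ) (hα : 0 < α) (hβ : 0 < β)
    (H : Fin 3 → Fin 3 → ℝ)
    (hH : H = ![![-(2*α), α, β], ![α, -(2*α), α], ![α, α, -(α+β)]])
    (p : Fin 3 → ℝ)
    (hp : p = ![α^2 + 2*α*β, 2*α^2 + α*β, 3*α^2]) :
    (1/2) * ∑ i, ∑ j,
      (H i j * p j - H j i * p i) * Real.log (H i j * p j / (H j i * p i))
      = α^2 * (α - β) * Real.log (α / β) ∧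
    (α ≠ β → 0 < α^2 * (α - β) * Real.log (α / β)) ∧
    (α = β → α^2 * (α - β) * Real.log (α / β) = 0) := by
  refine ⟨?_, ?_, ?_⟩
  · subst hH hp
    simp only [Fin.sum_univ_three, Matrix.cons_val_zero, Matrix.cons_val_one, Matrix.head_cons,
      Matrix.cons_val_two, Matrix.tail_cons, Matrix.head_fin_const, sub_self, zero_mul]
    have h1 : α*(α^2+2*α*β) ≠ 0 := by positivity
    have h2 : α*(2*α^2+α*β) ≠ 0 := by positivity
    have h3 : β*(3*α^2) ≠ 0 := by positivity
    have h4 : α*(3*α^2) ≠ 0 := by positivity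
    have h5 : (3*α^2 : ℝ) ≠ 0 := by positivity
    rw [Real.log_div h2 h1, Real.log_div h3 h1, Real.log_div h1 h2, Real.log_div h4 h2,
      Real.log_div h1 h3, Real.log_div h2 h4, Real.log_div hα.ne' hβ.ne',
      Real.log_mul hα.ne' h5, Real.log_mul hβ.ne' h5]
    ring
  · intro hne
    have hsq : 0 < α^2 := by positivity
    rcases lt_or_gt_of_ne hne with h | h
    · have hlog : Real.log (α / β) < 0 := by
        apply Real.log_neg (by positivity)
        rw [div_lt_one hβ]; exact h
      have : 0 < (β - α) * (-Real.log (α / β)) :=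
        mul_pos (by linarith) (by linarith)
      nlinarith
    · have hlog : 0 < Real.log (α / β) := by
        apply Real.log_pos
        rw [lt_div_iff₀ hβ]; linarith
      have : 0 < (α - β) * Real.log (α / β) := mul_pos (by linarith) hlog
      nlinarith
  · intro h; rw [h]; ring
end

section
/- Principle of minimum dissipation: for an open detailed balanced Markov process with boundary B ⊆ V, a vector p ∈ ℝ^V with p|_B = b is a steady state of the open master equation (i.e. ∑_j H_{ij} p_j = 0 for all internal i ∈ V∖B) if and only if p minimizes the dissipation D(p) = (1/2) ∑_{i,j} H_{ij} q_j (p_j/q_j − p_i/q_i)² over all p' with p'|_B = b; equivalently, the vanishing of ∂D/∂p_n for all internal n is equivalent to the steady-state condition. -/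
theorem min_diss_aux {V : Type*} [Fintype V] [DecidableEq V] (c : V → V → ℝ)
    (csymm : ∀ i j, c i j = c j i) (cnn : ∀ i j, i ≠ j → 0 ≤ c i j)
    (crow : ∀ i, ∑ j, c i j = 0) (B : Finset V) (u : V → ℝ) :
    (∀ i, i ∉ B → ∑ j, c i j * u j = 0) ↔
    (∀ u' : V → ℝ, (∀ i ∈ B, u' i = u i) →
      ∑ i, ∑ j, c i j * (u j - u i)^2 ≤ ∑ i, ∑ j, c i j * (u' j - u' i)^2) := by
  -- inner row computation
  have inner : ∀ i, ∑ j, c i j * (u j - u i) = ∑ j, c i j * u j := by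
    intro i
    have h : ∑ j, c i j * (u j - u i) = ∑ j, c i j * u j - (∑ j, c i j) * u i := by
      rw [Finset.sum_mul, ← Finset.sum_sub_distrib]
      exact Finset.sum_congr rfl fun j _ => by ring
    rw [h, crow, zero_mul, sub_zero]
  have cross : ∀ v : V → ℝ,
      (∑ i, ∑ j, c i j * (u j - u i) * (v j - v i))
        = -2 * ∑ i, v i * ∑ j, c i j * u j := by
    intro v
    have first : (∑ i, ∑ j, c i j * (u j - u i) * v j)
        = -(∑ i, ∑ j, c i j * (u j - u i) * v i) := by
      rw [Finset.sum_comm, ← Finset.sum_neg_distrib]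
      refine Finset.sum_congr rfl fun i _ => ?_
      rw [← Finset.sum_neg_distrib]
      refine Finset.sum_congr rfl fun j _ => ?_
      rw [csymm j i]; ring
    calc ∑ i, ∑ j, c i j * (u j - u i) * (v j - v i)
        = (∑ i, ∑ j, c i j * (u j - u i) * v j)
          - ∑ i, ∑ j, c i j * (u j - u i) * v i := by
          simp_rw [show ∀ i j, c i j * (u j - u i) * (v j - v i)
            = c i j * (u j - u i) * v j - c i j * (u j - u i) * v i from
            fun i j => by ring, Finset.sum_sub_distrib]
      _ = -2 * ∑ i, ∑ j, c i j * (u j - u i) * v i := by rw [first]; ring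
      _ = -2 * ∑ i, v i * ∑ j, c i j * u j := by
          congr 1
          refine Finset.sum_congr rfl fun i _ => ?_
          rw [← inner i, Finset.mul_sum]
          exact Finset.sum_congr rfl fun j _ => by ring
  have expand : ∀ v : V → ℝ,
      ∑ i, ∑ j, c i j * ((u j + v j) - (u i + v i))^2
        = ∑ i, ∑ j, c i j * (u j - u i)^2
          + 2 * (∑ i, ∑ j, c i j * (u j - u i) * (v j - v i))
          + ∑ i, ∑ j, c i j * (v j - v i)^2 := by
    intro v
    simp_rw [show ∀ i j, c i j * ((u j + v j) - (u i + v i))^2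
      = c i j * (u j - u i)^2 + 2 * (c i j * (u j - u i) * (v j - v i))
        + c i j * (v j - v i)^2 from fun i j => by ring,
      Finset.sum_add_distrib, ← Finset.mul_sum]
  have Enn : ∀ w : V → ℝ, 0 ≤ ∑ i, ∑ j, c i j * (w j - w i)^2 := by
    intro w
    refine Finset.sum_nonneg fun i _ => Finset.sum_nonneg fun j _ => ?_
    rcases eq_or_ne i j with rfl | h
    · simp
    · exact mul_nonneg (cnn i j h) (sq_nonneg _)
  constructor
  · intro hS u' hb'
    have hv : ∀ i, u' i = u i + (u' i - u i) := fun i => by ring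
    calc ∑ i, ∑ j, c i j * (u j - u i)^2
        ≤ ∑ i, ∑ j, c i j * (u j - u i)^2
          + 2 * (-2 * ∑ i, (u' i - u i) * ∑ j, c i j * u j)
          + ∑ i, ∑ j, c i j * ((u' j - u j) - (u' i - u i))^2 := by
          have hz : ∑ i, (u' i - u i) * ∑ j, c i j * u j = 0 := by
            refine Finset.sum_eq_zero fun i _ => ?_
            by_cases hi : i ∈ B
            · rw [hb' i hi]; ring
            · rw [hS i hi, mul_zero]
          rw [hz]
          have := Enn (fun i => u' i - u i)
          linarith
      _ = ∑ i, ∑ j, c i j * (u' j - u' i)^2 := by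
          rw [← cross (fun i => u' i - u i), ← expand (fun i => u' i - u i)]
          refine Finset.sum_congr rfl fun i _ => Finset.sum_congr rfl fun j _ => ?_
          ring_nf
  · intro hmin i hiB
    set S : ℝ := ∑ j, c i j * u j with hSdef
    set K : ℝ := ∑ a, ∑ b_1, c a b_1 *
      ((if b_1 = i then (1:ℝ) else 0) - (if a = i then 1 else 0))^2 with hKdef
    have hK : 0 ≤ K := Enn (fun a => if a = i then 1 else 0)
    have key : ∀ t : ℝ, 0 ≤ 2 * (-2 * (t * S)) + t^2 * K := by
      intro t
      have hb' : ∀ a ∈ B, (fun a => u a + t * (if a = i then (1:ℝ) else 0)) a = u a := by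
        intro a ha
        have hne : a ≠ i := fun h => hiB (h ▸ ha)
        simp [hne]
      have hm := hmin _ hb'
      rw [expand (fun a => t * (if a = i then (1:ℝ) else 0)), cross] at hm
      have h1 : ∑ a, (t * (if a = i then (1:ℝ) else 0)) * (∑ j, c a j * u j)
          = t * S := by
        rw [Finset.sum_eq_single i]
        · simp [hSdef]
        · intro a _ ha; simp [ha]
        · intro h; exact absurd (Finset.mem_univ i) h
      have h2 : ∑ a, ∑ b_1, c a b_1 *
          ((t * (if b_1 = i then (1:ℝ) else 0)) - t * (if a = i then (1:ℝ) else 0))^2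
          = t^2 * K := by
        rw [hKdef, Finset.mul_sum]
        refine Finset.sum_congr rfl fun a _ => ?_
        rw [Finset.mul_sum]
        refine Finset.sum_congr rfl fun b_1 _ => by ring
      rw [h1, h2] at hm
      linarith
    have hk1 : (0:ℝ) < K + 1 := by linarith
    have h := key (S / (K + 1))
    have h2 : (0:ℝ) ≤ (2 * (-2 * (S / (K + 1) * S)) + (S / (K + 1))^2 * K) * (K+1)^2 :=
      mul_nonneg h (by positivity)
    have h3 : (2 * (-2 * (S / (K + 1) * S)) + (S / (K + 1))^2 * K) * (K+1)^2
        = S^2 * (-3*K - 4) := by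
      field_simp
      ring
    rw [h3] at h2
    have hS2 : S^2 = 0 := by nlinarith [sq_nonneg S]
    exact pow_eq_zero_iff two_ne_zero |>.mp hS2

/-- Principle of minimum dissipation: with boundary probabilities fixed, `p` is a
steady state of the open master equation iff it minimizes the dissipation. -/
theorem stmt_13 {V : Type*} [Fintype V] [DecidableEq V] (H : V → V → ℝ)
    (hoff : ∀ i j, i ≠ j → 0 ≤ H i j)
    (hcol : ∀ j, ∑ i, H i j = 0)
    (q : V → ℝ) (hq : ∀ i, 0 < q i)
    (hdb : ∀ i j, H i j * q j = H j i * q i)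
    (B : Finset V) (b : V → ℝ)
    (p : V → ℝ) (hpb : ∀ i ∈ B, p i = b i) :
    (∀ i, i ∉ B → ∑ j, H i j * p j = 0) ↔
    (∀ p' : V → ℝ, (∀ i ∈ B, p' i = b i) →
      (1/2) * ∑ i, ∑ j, H i j * q j * (p j / q j - p i / q i)^2 ≤
      (1/2) * ∑ i, ∑ j, H i j * q j * (p' j / q j - p' i / q i)^2) := by
  have hqne : ∀ i, q i ≠ 0 := fun i => (hq i).ne'
  have crow : ∀ i, ∑ j, H i j * q j = 0 := by
    intro i
    have h : ∑ j, H i j * q j = (∑ j, H j i) * q i := by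
      rw [Finset.sum_mul]; exact Finset.sum_congr rfl fun j _ => hdb i j
    rw [h, hcol, zero_mul]
  have haux := min_diss_aux (fun i j => H i j * q j)
    (fun i j => hdb i j) (fun i j hij => mul_nonneg (hoff i j hij) (hq j).le)
    crow B (fun i => p i / q i)
  have hLeq : ∀ i, (∑ j, H i j * q j * (p j / q j)) = ∑ j, H i j * p j := by
    intro i
    refine Finset.sum_congr rfl fun j _ => ?_
    field_simp [hqne j]
  constructor
  · intro h p' hp'
    have hL : ∀ i, i ∉ B → ∑ j, H i j * q j * (p j / q j) = 0 := by
      intro i hi; rw [hLeq i]; exact h i hi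
    have hb' : ∀ i ∈ B, p' i / q i = p i / q i := by
      intro i hi; rw [hp' i hi, hpb i hi]
    have := haux.mp hL (fun i => p' i / q i) hb'
    linarith
  · intro h i hi
    have hmin : ∀ u' : V → ℝ, (∀ i ∈ B, u' i = p i / q i) →
        ∑ i, ∑ j, H i j * q j * (p j / q j - p i / q i)^2 ≤
        ∑ i, ∑ j, H i j * q j * (u' j - u' i)^2 := by
      intro u' hu'
      have hp' : ∀ i ∈ B, u' i * q i = b i := by
        intro i hiB
        rw [hu' i hiB, div_mul_cancel₀ _ (hqne i), hpb i hiB]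
      have hm := h (fun i => u' i * q i) hp'
      have he : ∑ i, ∑ j, H i j * q j * (u' j * q j / q j - u' i * q i / q i)^2
          = ∑ i, ∑ j, H i j * q j * (u' j - u' i)^2 := by
        refine Finset.sum_congr rfl fun a _ => Finset.sum_congr rfl fun c _ => ?_
        rw [mul_div_cancel_right₀ _ (hqne c), mul_div_cancel_right₀ _ (hqne a)]
      rw [he] at hm
      linarith
    have := haux.mpr hmin i hi
    rw [hLeq i] at this
    exact this
end

section
/- For an internal state n, the partial derivative of the dissipation satisfies (q_n/2) ∂D(p)/∂p_n = −∑_j H_{nj} p_j, where D(p) = (1/2)∑_{i,j} H_{ij} q_j (p_j/q_j − p_i/q_i)² and q is a detailed balanced equilibrium; hence the master equation can be written as the gradient flow dp/dt = −∇D(p) with ∇_i = (q_i/2) ∂/∂p_i. -/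
/-- The gradient of the dissipation recovers the master equation:
`(q_n/2) ∂D/∂p_n = −∑_j H_{nj} p_j`. -/
theorem stmt_14 {V : Type*} [Fintype V] [DecidableEq V] (H : V → V → ℝ)
    (hoff : ∀ i j, i ≠ j → 0 ≤ H i j)
    (hcol : ∀ j, ∑ i, H i j = 0)
    (q : V → ℝ) (hq : ∀ i, 0 < q i)
    (hdb : ∀ i j, H i j * q j = H j i * q i)
    (p : V → ℝ) (n : V) (d : ℝ)
    (hd : HasDerivAt (fun x => (1/2) * ∑ i, ∑ j, H i j * q j *
        ((Function.update p n x) j / q j - (Function.update p n x) i / q i)^2)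
      d (p n)) :
    q n / 2 * d = -(∑ j, H n j * p j) := by
  classical
  have hqne : ∀ i, q i ≠ 0 := fun i => (hq i).ne'
  simp only [Function.update_apply] at hd
  -- Compute the derivative explicitly, term by term
  have key : HasDerivAt (fun x => (1/2 : ℝ) * ∑ i, ∑ j, H i j * q j *
      ((if j = n then x else p j) / q j - (if i = n then x else p i) / q i)^2)
      ((1/2) * ∑ i, ∑ j, H i j * q j *
        (2 * ((if j = n then p n else p j) / q j - (if i = n then p n else p i) / q i) *
          ((if j = n then (1:ℝ) else 0) / q j - (if i = n then (1:ℝ) else 0) / q i))) (p n) := by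
    apply HasDerivAt.const_mul
    apply HasDerivAt.fun_sum
    intro i _
    apply HasDerivAt.fun_sum
    intro j _
    apply HasDerivAt.const_mul
    have hA : HasDerivAt (fun x => (if j = n then x else p j) / q j - (if i = n then x else p i) / q i)
        ((if j = n then (1:ℝ) else 0) / q j - (if i = n then (1:ℝ) else 0) / q i) (p n) := by
      apply HasDerivAt.sub
      · split_ifs
        · exact (hasDerivAt_id _).div_const _
        · simpa using (hasDerivAt_const (p n) (p j)).div_const (q j)
      · split_ifs
        · exact (hasDerivAt_id _).div_const _
        · simpa using (hasDerivAt_const (p n) (p i)).div_const (q i)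
    have := hA.fun_pow 2
    simpa [mul_comm, mul_assoc, mul_left_comm] using this
  have hde := hd.unique key
  subst hde
  -- Now evaluate the explicit derivative
  have hsum0 : ∑ j, H n j * q j = 0 := by
    calc ∑ j, H n j * q j = ∑ j, H j n * q n := Finset.sum_congr rfl fun j _ => hdb n j
      _ = (∑ j, H j n) * q n := by rw [Finset.sum_mul]
      _ = 0 := by rw [hcol n, zero_mul]
  have hpite : ∀ j : V, (if j = n then p n else p j) = p j := by
    intro j; split_ifs with h; exacts [by rw [h], rfl]
  simp only [hpite]
  have step1 : ∀ i j : V, H i j * q j * (2 * (p j / q j - p i / q i) *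
      ((if j = n then (1:ℝ) else 0) / q j - (if i = n then (1:ℝ) else 0) / q i))
      = (if j = n then H i j * q j * (2 * (p j / q j - p i / q i)) / q j else 0)
        - (if i = n then H i j * q j * (2 * (p j / q j - p i / q i)) / q i else 0) := by
    intro i j; split_ifs <;> ring
  simp only [step1, Finset.sum_sub_distrib, Finset.sum_ite_eq' Finset.univ n]
  simp only [Finset.mem_univ, if_true]
  have e2 : (∑ x : V, ∑ y : V, if x = n then H x y * q y * (2 * (p y / q y - p x / q x)) / q x else 0)
      = ∑ y : V, H n y * q y * (2 * (p y / q y - p n / q n)) / q n := by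
    rw [Finset.sum_comm]
    simp
  rw [e2]
  have eA : ∑ x : V, H x n * q n * (2 * (p n / q n - p x / q x)) / q n
      = -((2 / q n) * ∑ x : V, H n x * p x) := by
    have h1 : ∀ x : V, H x n * q n * (2 * (p n / q n - p x / q x)) / q n
        = (2 * p n / (q n * q n)) * (H n x * q x) - (2 / q n) * (H n x * p x) := by
      intro x; rw [hdb x n]; field_simp [hqne n, hqne x]
    rw [Finset.sum_congr rfl fun x _ => h1 x, Finset.sum_sub_distrib,
      ← Finset.mul_sum, ← Finset.mul_sum, hsum0, mul_zero, zero_sub]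
  have eB : ∑ y : V, H n y * q y * (2 * (p y / q y - p n / q n)) / q n
      = (2 / q n) * ∑ y : V, H n y * p y := by
    have h2 : ∀ y : V, H n y * q y * (2 * (p y / q y - p n / q n)) / q n
        = (2 / q n) * (H n y * p y) - (2 * p n / (q n * q n)) * (H n y * q y) := by
      intro y; field_simp [hqne n, hqne y]
    rw [Finset.sum_congr rfl fun y _ => h2 y, Finset.sum_sub_distrib,
      ← Finset.mul_sum, ← Finset.mul_sum, hsum0, mul_zero, sub_zero]
  rw [eA, eB]
  field_simp
  rw [mul_assoc, mul_div_cancel_left₀ _ (hqne n)]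
  ring
end

section
/- For a closed Markov process with detailed balanced equilibrium q, the time derivative of I_D(p(t),q) = (1/2)∑_i p_i²/q_i along the master equation equals −D(p), i.e. d/dt (1/2)∑_i p_i(t)²/q_i = ∑_{i,j} H_{ij} q_j p_i p_j/(q_i q_j) = −D(p(t)). -/
/-- Along the master equation, `d/dt (1/2)∑ p_i²/q_i` equals
`∑ H_{ij} q_j p_i p_j/(q_i q_j)`, which is minus the dissipation. -/
theorem stmt_16 {V : Type*} [Fintype V] (H : V → V → ℝ)
    (hoff : ∀ i j, i ≠ j → 0 ≤ H i j)
    (hcol : ∀ j, ∑ i, H i j = 0)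
    (q : V → ℝ) (hq : ∀ i, 0 < q i)
    (hdb : ∀ i j, H i j * q j = H j i * q i)
    (p : ℝ → V → ℝ)
    (hp : ∀ i t, HasDerivAt (fun s => p s i) (∑ j, H i j * p t j) t)
    (t d : ℝ)
    (hd : HasDerivAt (fun s => (1/2) * ∑ i, (p s i)^2 / q i) d t) :
    d = ∑ i, ∑ j, H i j * q j * (p t i * p t j) / (q i * q j) ∧
    d = -((1/2) * ∑ i, ∑ j, H i j * q j * (p t j / q j - p t i / q i)^2) := by
  have hqne : ∀ i, q i ≠ 0 := fun i => (hq i).ne'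
  -- derivative computation
  have hd' : HasDerivAt (fun s => (1/2) * ∑ i, (p s i)^2 / q i)
      ((1/2) * ∑ i, (2 * p t i * (∑ j, H i j * p t j)) / q i) t := by
    apply HasDerivAt.const_mul
    apply HasDerivAt.fun_sum
    intro i _
    have := ((hp i t).pow 2).div_const (q i)
    simpa [mul_comm, mul_assoc, mul_left_comm] using this
  have hdeq : d = (1/2) * ∑ i, (2 * p t i * (∑ j, H i j * p t j)) / q i :=
    hd.unique hd'
  -- first equality
  have h1 : d = ∑ i, ∑ j, H i j * q j * (p t i * p t j) / (q i * q j) := by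
    rw [hdeq, Finset.mul_sum]
    apply Finset.sum_congr rfl
    intro i _
    rw [show (2 * p t i * ∑ j, H i j * p t j) = ∑ j, 2 * p t i * (H i j * p t j)
          from Finset.mul_sum _ _ _, Finset.sum_div, Finset.mul_sum]
    apply Finset.sum_congr rfl
    intro j _
    rw [show H i j * q j * (p t i * p t j) / (q i * q j)
          = H i j * (p t i * p t j) * q j / (q i * q j) by ring,
      mul_div_mul_right _ _ (hqne j)]
    ring
  refine ⟨h1, ?_⟩
  rw [h1]
  -- rewrite each square term
  have key : ∀ i j, H i j * q j * (p t j / q j - p t i / q i)^2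
      = H i j * q j * (p t j / q j)^2 + H i j * q j * (p t i / q i)^2
        - 2 * (H i j * q j * (p t i * p t j) / (q i * q j)) := by
    intro i j
    have := hqne i; have := hqne j
    field_simp
    ring
  have hsum : ∑ i, ∑ j, H i j * q j * (p t j / q j - p t i / q i)^2
      = (∑ i, ∑ j, H i j * q j * (p t j / q j)^2)
        + (∑ i, ∑ j, H i j * q j * (p t i / q i)^2)
        - 2 * ∑ i, ∑ j, H i j * q j * (p t i * p t j) / (q i * q j) := by
    simp only [key, Finset.sum_add_distrib, Finset.sum_sub_distrib, Finset.mul_sum]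
  have hA : (∑ i, ∑ j, H i j * q j * (p t j / q j)^2) = 0 := by
    rw [Finset.sum_comm]
    apply Finset.sum_eq_zero
    intro j _
    have : ∑ i, H i j * q j * (p t j / q j)^2
        = (∑ i, H i j) * (q j * (p t j / q j)^2) := by
      rw [Finset.sum_mul]
      apply Finset.sum_congr rfl
      intro i _; ring
    rw [this, hcol j, zero_mul]
  have hB : (∑ i, ∑ j, H i j * q j * (p t i / q i)^2) = 0 := by
    apply Finset.sum_eq_zero
    intro i _
    have hrow : ∑ j, H i j * q j = 0 := by
      calc ∑ j, H i j * q j = ∑ j, H j i * q i := by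
            exact Finset.sum_congr rfl fun j _ => hdb i j
        _ = (∑ j, H j i) * q i := by rw [Finset.sum_mul]
        _ = 0 := by rw [hcol i, zero_mul]
    have : ∑ j, H i j * q j * (p t i / q i)^2
        = (∑ j, H i j * q j) * (p t i / q i)^2 := by rw [Finset.sum_mul]
    rw [this, hrow, zero_mul]
  rw [hsum, hA, hB]
  ring
end

section
/- For the three-state chain A—B—C with all transition rates equal to 1 and uniform detailed balanced equilibrium q = (1,1,1), with boundary probabilities p_A, p_C > 0 fixed: (a) the dissipation-minimizing internal probability is p_B = (p_A + p_C)/2; (b) the value of p_B extremizing the rate of change of relative entropy satisfies (p_A + p_C)/(2 p_B) − ln(p_B) − 2 = 0, equivalently p_B = (p_A+p_C)/(2 W((p_A+p_C)e²/2)) where W is the Lambert W function. -/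
/-- Three-state chain with unit rates: (a) `p_B = (p_A+p_C)/2` minimizes dissipation;
(b) the extremizer of the relative-entropy rate satisfies
`(p_A+p_C)/(2p_B) − ln p_B − 2 = 0`, equivalently it is given by the Lambert W function. -/
theorem stmt_18 (pA pC : ℝ) (hA : 0 < pA) (hC : 0 < pC) :
    (∀ x : ℝ, (pA - (pA + pC)/2)^2 + ((pA + pC)/2 - pC)^2 ≤ (pA - x)^2 + (x - pC)^2) ∧
    (∀ x : ℝ, 0 < x → ∀ d : ℝ,
      HasDerivAt (fun y => -(pA - y) * Real.log (pA / y) - (y - pC) * Real.log (y / pC)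
        + (pA - y) * (Real.log pA + 1) + (pC - y) * (Real.log pC + 1)) d x →
      (d = 0 ↔ (pA + pC) / (2 * x) - Real.log x - 2 = 0)) ∧
    (∀ x : ℝ, 0 < x →
      (((pA + pC) / (2 * x) - Real.log x - 2 = 0) ↔
        ∃ w : ℝ, w * Real.exp w = (pA + pC) / 2 * Real.exp 2 ∧
          x = (pA + pC) / (2 * w))) := by
  refine ⟨?_, ?_, ?_⟩
  · intro x
    nlinarith [sq_nonneg (x - (pA + pC)/2), sq_nonneg (pA - pC)]
  · intro x hx d hd
    have hlog : HasDerivAt Real.log x⁻¹ x := Real.hasDerivAt_log hx.ne'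
    set g : ℝ → ℝ := fun y => -(pA - y) * (Real.log pA - Real.log y)
        - (y - pC) * (Real.log y - Real.log pC)
        + (pA - y) * (Real.log pA + 1) + (pC - y) * (Real.log pC + 1) with hg
    have hD : HasDerivAt g ((pA + pC)/x - 2*Real.log x - 4) x := by
      have h :=
        (((((hasDerivAt_const x pA).sub (hasDerivAt_id x)).neg.mul
            ((hasDerivAt_const x (Real.log pA)).sub hlog)).sub
          (((hasDerivAt_id x).sub (hasDerivAt_const x pC)).mul
            (hlog.sub (hasDerivAt_const x (Real.log pC))))).add
          (((hasDerivAt_const x pA).sub (hasDerivAt_id x)).mul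
            (hasDerivAt_const x (Real.log pA + 1)))).add
          (((hasDerivAt_const x pC).sub (hasDerivAt_id x)).mul
            (hasDerivAt_const x (Real.log pC + 1)))
      refine h.congr_deriv ?_
      simp only [Pi.sub_apply, Pi.neg_apply, id]
      field_simp [hx.ne']
      ring
    have heq : (fun y => -(pA - y) * Real.log (pA / y) - (y - pC) * Real.log (y / pC)
        + (pA - y) * (Real.log pA + 1) + (pC - y) * (Real.log pC + 1)) =ᶠ[nhds x] g := by
      filter_upwards [eventually_gt_nhds hx] with y hy
      rw [hg]
      simp only [Real.log_div hA.ne' hy.ne', Real.log_div hy.ne' hC.ne']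
    have hf : HasDerivAt (fun y => -(pA - y) * Real.log (pA / y) - (y - pC) * Real.log (y / pC)
        + (pA - y) * (Real.log pA + 1) + (pC - y) * (Real.log pC + 1))
        ((pA + pC)/x - 2*Real.log x - 4) x := hD.congr_of_eventuallyEq heq
    have hdval : d = (pA + pC)/x - 2*Real.log x - 4 := hd.unique hf
    have key : (pA + pC)/x - 2*Real.log x - 4
        = 2 * ((pA + pC) / (2 * x) - Real.log x - 2) := by
      field_simp
      ring
    rw [hdval, key]
    constructor
    · intro h; linarith
    · intro h; rw [h]; ring
  · intro x hx
    constructor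
    · intro h
      refine ⟨(pA + pC) / (2 * x), ?_, ?_⟩
      · have hw : (pA + pC) / (2 * x) = Real.log x + 2 := by linarith
        rw [hw, Real.exp_add, Real.exp_log hx]
        have : (pA + pC) = (Real.log x + 2) * (2 * x) := by
          have h2x : (2:ℝ) * x ≠ 0 := by positivity
          field_simp at hw
          linarith
        rw [this]; ring
      · have hpos : 0 < (pA + pC) / (2 * x) := by positivity
        field_simp
    · rintro ⟨w, hw1, hw2⟩
      have hsum : 0 < pA + pC := by linarith
      have hwne : w ≠ 0 := by
        intro h0
        rw [h0] at hw2
        simp at hw2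
        rw [hw2] at hx
        exact lt_irrefl 0 hx
      have hwpos : 0 < w := by
        rcases lt_or_gt_of_ne hwne with h | h
        · exfalso
          have : w * Real.exp w < 0 := mul_neg_of_neg_of_pos h (Real.exp_pos w)
          have hp : 0 < (pA + pC) / 2 * Real.exp 2 := by positivity
          linarith [hw1]
        · exact h
      -- x = e^(w-2)
      have hxval : x = Real.exp (w - 2) := by
        have : (pA + pC) / 2 = w * Real.exp (w - 2) := by
          have := hw1
          rw [Real.exp_sub]
          field_simp
          nlinarith [Real.exp_pos (2:ℝ)]
        rw [hw2]
        field_simp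
        nlinarith [this]
      have hlogx : Real.log x = w - 2 := by rw [hxval, Real.log_exp]
      have hfrac : (pA + pC) / (2 * x) = w := by
        rw [hw2]
        field_simp
      rw [hfrac, hlogx]
      ring
end
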